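/- Let G be a directed mixed graph over micro-variables X whose joint distribution P_X has positive density, and suppose the pair (G, P_X) is σ-Markovian and σ-faithful. Let P be a partition of X with coarse graph co(G,P). Assume that for every path Π on co(G,P) there exists a path π on G such that (i) co(π) = Π and (ii) whenever Π is not σ-blocked by a set S ⊆ P, then π is not σ-blocked by T = ∪_{W∈S} W. Then (co(G,P), P_X) is σ-faithful. -/
import Mathlib


/-! ## Mixed graphs -/

/-- A mixed graph: directed, bidirected and undirected edges, no self-edges. -/
structure MixedGraph (V : Type) where
  dir : V → V → Prop
  bidir : V → V → Prop
  undir : V → V → Prop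
  bidir_symm : ∀ {a b}, bidir a b → bidir b a
  undir_symm : ∀ {a b}, undir a b → undir b a
  dir_irrefl : ∀ a, ¬ dir a a
  bidir_irrefl : ∀ a, ¬ bidir a a
  undir_irrefl : ∀ a, ¬ undir a a

namespace MixedGraph

variable {V I : Type}

/-- A directed mixed graph is a mixed graph without undirected edges. -/
def IsDMG (G : MixedGraph V) : Prop := ∀ a b, ¬ G.undir a b

/-- `a` and `b` lie in the same strongly connected component: there are directed
paths between them in both directions. -/
def Strongly (G : MixedGraph V) (a b : V) : Prop :=
  Relation.ReflTransGen G.dir a b ∧ Relation.ReflTransGen G.dir b a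

lemma Strongly.refl (G : MixedGraph V) (a : V) : G.Strongly a a :=
  ⟨Relation.ReflTransGen.refl, Relation.ReflTransGen.refl⟩

lemma Strongly.symm {G : MixedGraph V} {a b : V} (h : G.Strongly a b) : G.Strongly b a :=
  ⟨h.2, h.1⟩

/-- A graph is acyclic if it has no nontrivial directed closed walk. -/
def Acyclic (G : MixedGraph V) : Prop := ∀ a, ¬ Relation.TransGen G.dir a a

end MixedGraph

/-! ## Walks -/

/-- The four ways in which an edge can occur on a walk, as traversed from its
first node `a` to its second node `b`: `fw` is `a → b`, `bw` is `a ← b`,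
`bi` is `a ↔ b` and `un` is `a − b`. -/
inductive StepKind | fw | bw | bi | un
deriving DecidableEq

/-- A step of a walk: an ordered pair of nodes together with the kind of edge. -/
structure Step (V : Type) where
  a : V
  b : V
  k : StepKind

/-- The step is an actual edge of the graph `G`. -/
def Step.ok {V : Type} (G : MixedGraph V) (s : Step V) : Prop :=
  match s.k with
  | .fw => G.dir s.a s.b
  | .bw => G.dir s.b s.a
  | .bi => G.bidir s.a s.b
  | .un => G.undir s.a s.b

/-- The edge of the step has an arrowhead at its first node. -/
def Step.headA {V : Type} (s : Step V) : Prop := s.k = .bw ∨ s.k = .bi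

/-- The edge of the step has an arrowhead at its second node. -/
def Step.headB {V : Type} (s : Step V) : Prop := s.k = .fw ∨ s.k = .bi

namespace MixedGraph

variable {V I : Type}

/-- `IsWalk G x y L`: the list of steps `L` forms a walk from `x` to `y` in `G`. -/
inductive IsWalk (G : MixedGraph V) : V → V → List (Step V) → Prop
  | nil (a : V) : IsWalk G a a []
  | cons {c : V} (s : Step V) (L : List (Step V)) (hok : s.ok G)
      (hw : IsWalk G s.b c L) : IsWalk G s.a c (s :: L)

/-- `v` is a collider at junction `i` of the walk `L`: both edges adjacent to the
inner node `v` point into `v`. -/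
def ColliderAt (L : List (Step V)) (i : ℕ) (v : V) : Prop :=
  ∃ s t, L[i]? = some s ∧ L[i+1]? = some t ∧ s.b = v ∧ t.a = v ∧ s.headB ∧ t.headA

/-- `v` is a non-collider at junction `i` of the walk `L`. -/
def NonColliderAt (L : List (Step V)) (i : ℕ) (v : V) : Prop :=
  ∃ s t, L[i]? = some s ∧ L[i+1]? = some t ∧ s.b = v ∧ t.a = v ∧ ¬ (s.headB ∧ t.headA)

/-- The walk `L` from `x` to `y` is m-blocked by the node set `S`. -/
def MBlockedWalk (G : MixedGraph V) (S : Set V) (x y : V) (L : List (Step V)) : Prop :=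
  x ∈ S ∨ y ∈ S ∨
  (∃ i v, ColliderAt L i v ∧ ∀ d, Relation.ReflTransGen G.dir v d → d ∉ S) ∨
  (∃ i v, NonColliderAt L i v ∧ v ∈ S)

/-- The walk `L` from `x` to `y` is σ-blocked by the node set `S`. -/
def SigmaBlockedWalk (G : MixedGraph V) (S : Set V) (x y : V) (L : List (Step V)) : Prop :=
  x ∈ S ∨ y ∈ S ∨
  (∃ i v, ColliderAt L i v ∧ ∀ d, Relation.ReflTransGen G.dir v d → d ∉ S) ∨
  (∃ i s t, L[i]? = some s ∧ L[i+1]? = some t ∧ s.b = t.a ∧ ¬ (s.headB ∧ t.headA) ∧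
    s.b ∈ S ∧
    (((s.k = .bw ∨ s.k = .un) ∧ ¬ G.Strongly s.b s.a) ∨
     ((t.k = .fw ∨ t.k = .un) ∧ ¬ G.Strongly t.a t.b)))

/-- `x` and `y` are m-separated by `S` in `G`. -/
def MSep (G : MixedGraph V) (S : Set V) (x y : V) : Prop :=
  ∀ L, G.IsWalk x y L → G.MBlockedWalk S x y L

/-- `x` and `y` are σ-separated by `S` in `G`. -/
def SigmaSep (G : MixedGraph V) (S : Set V) (x y : V) : Prop :=
  ∀ L, G.IsWalk x y L → G.SigmaBlockedWalk S x y L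

/-! ## Acyclification -/

/-- The acyclification of a mixed graph. -/
def acy (G : MixedGraph V) : MixedGraph V where
  dir a b := (∃ c, G.dir a c ∧ G.Strongly c b) ∧ ¬ G.Strongly a b
  bidir a b := a ≠ b ∧ (G.Strongly a b ∨
    ∃ a' b', G.Strongly a a' ∧ G.Strongly b b' ∧ G.bidir a' b')
  undir a b := ¬ G.Strongly a b ∧ G.undir a b
  bidir_symm := by
    rintro a b ⟨hab, h | ⟨a', b', ha, hb, h⟩⟩
    · exact ⟨hab.symm, Or.inl h.symm⟩
    · exact ⟨hab.symm, Or.inr ⟨b', a', hb, ha, G.bidir_symm h⟩⟩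
  undir_symm := by
    rintro a b ⟨h1, h2⟩
    exact ⟨fun h => h1 h.symm, G.undir_symm h2⟩
  dir_irrefl := fun a h => h.2 (Strongly.refl G a)
  bidir_irrefl := fun a h => h.1 rfl
  undir_irrefl := fun a h => h.1 (Strongly.refl G a)

/-! ## Coarse graphs -/

/-- The coarse (quotient) graph of `G` with respect to the partition given by the
quotient map `q` onto the set of groups `I`. -/
def coarse (G : MixedGraph V) (q : V → I) : MixedGraph I where
  dir Y Z := Y ≠ Z ∧ ∃ y z, q y = Y ∧ q z = Z ∧ G.dir y z
  bidir Y Z := Y ≠ Z ∧ ∃ y z, q y = Y ∧ q z = Z ∧ G.bidir y z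
  undir Y Z := Y ≠ Z ∧ ∃ y z, q y = Y ∧ q z = Z ∧ G.undir y z
  bidir_symm := by
    rintro Y Z ⟨hne, y, z, hy, hz, h⟩
    exact ⟨hne.symm, z, y, hz, hy, G.bidir_symm h⟩
  undir_symm := by
    rintro Y Z ⟨hne, y, z, hy, hz, h⟩
    exact ⟨hne.symm, z, y, hz, hy, G.undir_symm h⟩
  dir_irrefl := fun Y h => h.1 rfl
  bidir_irrefl := fun Y h => h.1 rfl
  undir_irrefl := fun Y h => h.1 rfl

end MixedGraph

open MeasureTheory ProbabilityTheory

/-- The σ-algebra generated by the group `A` of the random variables `X v`. -/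
def genOf {Ω V : Type} [MeasurableSpace Ω] (X : V → Ω → ℝ) (A : Set V) :
    MeasurableSpace Ω :=
  ⨆ v ∈ A, MeasurableSpace.comap (X v) inferInstance

/-- Mutual conditional independence of the groups `Y` and `Z` of random variables
given the group `W`. -/
def GroupCI {Ω V : Type} [m : MeasurableSpace Ω] [StandardBorelSpace Ω]
    (μ : Measure Ω) [IsFiniteMeasure μ] (X : V → Ω → ℝ) (Y Z W : Set V) : Prop :=
  ∃ h : genOf X W ≤ m, ProbabilityTheory.CondIndep (genOf X W) (genOf X Y) (genOf X Z) h μ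

/-- The joint distribution of the variables `X v` has a positive density. -/
def HasPositiveDensity {Ω V : Type} [MeasurableSpace Ω] [Fintype V] (μ : Measure Ω)
    (X : V → Ω → ℝ) : Prop :=
  ∃ f : (V → ℝ) → ℝ, Measurable f ∧ (∀ x, 0 < f x) ∧
    Measure.map (fun ω v => X v ω) μ = volume.withDensity fun x => ENNReal.ofReal (f x)

open Classical in
/-- The coarse walk induced by a micro walk: steps internal to a group are dropped
(collapsing each `P`-segment to the single group containing it) and every
between-group step is replaced by the step of the same kind between the
corresponding groups. -/
noncomputable def coWalk {V I : Type} (q : V → I) (L : List (Step V)) : List (Step I) :=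
  L.filterMap fun s => if q s.a = q s.b then none else some ⟨q s.a, q s.b, s.k⟩

open MeasureTheory ProbabilityTheory MixedGraph

variable {Ω V I : Type}

/-- `(G, μ)` is σ-Markovian: σ-separation implies conditional independence. -/
def SigmaMarkov [m : MeasurableSpace Ω] [StandardBorelSpace Ω] (G : MixedGraph V)
    (μ : Measure Ω) [IsFiniteMeasure μ] (X : V → Ω → ℝ) : Prop :=
  ∀ (a b : V) (S : Set V), G.SigmaSep S a b → GroupCI μ X {a} {b} S

/-- `(G, μ)` is σ-faithful: conditional independence implies σ-separation. -/
def SigmaFaithful [m : MeasurableSpace Ω] [StandardBorelSpace Ω] (G : MixedGraph V)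
    (μ : Measure Ω) [IsFiniteMeasure μ] (X : V → Ω → ℝ) : Prop :=
  ∀ (a b : V) (S : Set V), GroupCI μ X {a} {b} S → G.SigmaSep S a b

/-- `(G, μ)` is m-Markovian: m-separation implies conditional independence. -/
def MMarkov [m : MeasurableSpace Ω] [StandardBorelSpace Ω] (G : MixedGraph V)
    (μ : Measure Ω) [IsFiniteMeasure μ] (X : V → Ω → ℝ) : Prop :=
  ∀ (a b : V) (S : Set V), G.MSep S a b → GroupCI μ X {a} {b} S

/-- The pair of the coarse graph `G.coarse q` and the distribution is σ-faithful on
the group level: mutual conditional independence of two groups given the union of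
the groups in `S` implies their σ-separation by `S` in the coarse graph. -/
def SigmaFaithfulGrp [m : MeasurableSpace Ω] [StandardBorelSpace Ω] (G : MixedGraph V)
    (q : V → I) (μ : Measure Ω) [IsFiniteMeasure μ] (X : V → Ω → ℝ) : Prop :=
  ∀ (Y Z : I) (S : Set I),
    GroupCI μ X (q ⁻¹' {Y}) (q ⁻¹' {Z}) (q ⁻¹' S) → (G.coarse q).SigmaSep S Y Z

/-- `L` is a path from `x` to `y`: a walk whose nodes are pairwise distinct. -/
def MixedGraph.IsPath {V : Type} (G : MixedGraph V) (x y : V) (L : List (Step V)) : Prop :=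
  G.IsWalk x y L ∧ (x :: L.map Step.b).Nodup

/-! ### Auxiliary lemmas for the proof -/

namespace AuxStmt13

open MixedGraph

variable {W : Type} {G : MixedGraph W} {x y : W} {L : List (Step W)}

lemma isWalk_append {z : W} {L2 : List (Step W)} (h1 : G.IsWalk x y L) (h2 : G.IsWalk y z L2) :
    G.IsWalk x z (L ++ L2) := by
  induction h1 with
  | nil => simpa
  | cons s L hok hw ih => exact .cons s _ hok (ih h2)

lemma walk_a_eq (h : G.IsWalk x y L) {t : ℕ} {s : Step W} (hs : L[t]? = some s) :
    (x :: L.map Step.b)[t]? = some s.a := by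
  induction h generalizing t with
  | nil => simp at hs
  | cons s0 L0 hok hw ih =>
    cases t with
    | zero => simp_all
    | succ t =>
      have := ih (t := t) (by simpa using hs)
      simpa using this

lemma walk_b_eq {t : ℕ} {s : Step W} (hs : L[t]? = some s) :
    (x :: L.map Step.b)[t+1]? = some s.b := by
  simp [hs]

lemma walk_glue (h : G.IsWalk x y L) {t : ℕ} {s s' : Step W}
    (hs : L[t]? = some s) (hs' : L[t+1]? = some s') : s.b = s'.a := by
  have h1 := walk_b_eq (x := x) hs
  have h2 := walk_a_eq h hs'
  rw [h1] at h2
  exact (Option.some_inj.mp h2)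

lemma walk_ok (h : G.IsWalk x y L) {t : ℕ} {s : Step W} (hs : L[t]? = some s) :
    s.ok G := by
  induction h generalizing t with
  | nil => simp at hs
  | cons s0 L0 hok hw ih =>
    cases t with
    | zero => simp_all
    | succ t => exact ih (t := t) (by simpa using hs)

lemma walk_take (h : G.IsWalk x y L) {i : ℕ} {v : W}
    (hv : (x :: L.map Step.b)[i]? = some v) : G.IsWalk x v (L.take i) := by
  induction h generalizing i with
  | nil a =>
    cases i with
    | zero => simp at hv; subst hv; exact .nil a
    | succ i => simp at hv
  | cons s0 L0 hok hw ih =>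
    cases i with
    | zero =>
      simp at hv
      subst hv
      exact .nil _
    | succ i =>
      have := ih (i := i) (by simpa using hv)
      exact .cons s0 _ hok this

lemma walk_drop (h : G.IsWalk x y L) {i : ℕ} {v : W}
    (hv : (x :: L.map Step.b)[i]? = some v) : G.IsWalk v y (L.drop i) := by
  induction h generalizing i with
  | nil a =>
    cases i with
    | zero => simp at hv; subst hv; exact .nil a
    | succ i => simp at hv
  | cons s0 L0 hok hw ih =>
    cases i with
    | zero =>
      simp at hv
      subst hv
      exact .cons s0 _ hok hw
    | succ i =>
      simpa using ih (i := i) (by simpa using hv)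

/-- Directed reachability along a block of consecutive `fw` steps of a walk. -/
lemma walk_chain (h : G.IsWalk x y L) :
    ∀ (n i : ℕ) (v w : W), (x :: L.map Step.b)[i]? = some v →
      (x :: L.map Step.b)[i+n]? = some w →
      (∀ t, t < n → ∀ s, L[i+t]? = some s → s.k = .fw) →
      Relation.ReflTransGen G.dir v w := by
  intro n
  induction n with
  | zero =>
    intro i v w hv hw _
    rw [Nat.add_zero, hv] at hw
    exact (Option.some_inj.mp hw) ▸ Relation.ReflTransGen.refl
  | succ n ih =>
    intro i v w hv hw hfw
    have hw0 : (x :: L.map Step.b)[(i+n)+1]? = some w := hw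
    have hw' : (L.map Step.b)[i+n]? = some w := by
      simpa using hw0
    obtain ⟨s, hs, hsb⟩ : ∃ s, L[i+n]? = some s ∧ s.b = w := by
      simpa using hw'
    have hmid : (x :: L.map Step.b)[i+n]? = some s.a := walk_a_eq h hs
    have hrt : Relation.ReflTransGen G.dir v s.a :=
      ih i v s.a hv hmid (fun t ht s' hs' => hfw t (Nat.lt_succ_of_lt ht) s' hs')
    have hk : s.k = .fw := hfw n (Nat.lt_succ_self n) s hs
    have hok : s.ok G := walk_ok h hs
    have hdir : G.dir s.a s.b := by
      unfold Step.ok at hok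
      rw [hk] at hok
      exact hok
    exact hrt.tail (hsb ▸ hdir)

lemma k_not_un (hD : G.IsDMG) {s : Step W} (hok : s.ok G) : s.k ≠ .un := by
  intro hk
  unfold Step.ok at hok
  rw [hk] at hok
  exact hD _ _ hok

lemma k_fw_of_not_headA (hD : G.IsDMG) {s : Step W} (hok : s.ok G) (h : ¬ s.headA) :
    s.k = .fw := by
  have := k_not_un hD hok
  unfold Step.headA at h
  cases hk : s.k <;> simp_all

lemma k_bw_of_not_headB (hD : G.IsDMG) {s : Step W} (hok : s.ok G) (h : ¬ s.headB) :
    s.k = .bw := by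
  have := k_not_un hD hok
  unfold Step.headB at h
  cases hk : s.k <;> simp_all

set_option maxHeartbeats 1600000 in
/-- Key combinatorial lemma: from a σ-open walk one can extract a σ-open path. -/
lemma exists_unblocked_path (hD : G.IsDMG) (S : Set W) (x y : W) :
    ∀ (n : ℕ) (L : List (Step W)), L.length ≤ n → G.IsWalk x y L →
      ¬ G.SigmaBlockedWalk S x y L →
      ∃ P, G.IsPath x y P ∧ ¬ G.SigmaBlockedWalk S x y P := by
  intro n
  induction n with
  | zero =>
    intro L hlen hw hnb
    have : L = [] := List.length_eq_zero_iff.mp (Nat.le_zero.mp hlen)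
    subst this
    exact ⟨[], ⟨hw, by simp⟩, hnb⟩
  | succ n ih =>
    intro L hlen hw hnb
    by_cases hnd : (x :: L.map Step.b).Nodup
    · exact ⟨L, ⟨hw, hnd⟩, hnb⟩
    · -- extract a duplicate node
      rw [List.nodup_iff_getElem?_ne_getElem?] at hnd
      push_neg at hnd
      obtain ⟨i, j, hij, hjlen, heq⟩ := hnd
      set ns := x :: L.map Step.b with hns
      have hnslen : ns.length = L.length + 1 := by simp [hns]
      have hjle : j ≤ L.length := by omega
      have hilt : i < L.length := by omega
      obtain ⟨v, hvi⟩ : ∃ v, ns[i]? = some v :=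
        ⟨ns[i]'(by omega), List.getElem?_eq_getElem _⟩
      have hvj : ns[j]? = some v := by rw [← heq]; exact hvi
      -- the shortened walk
      set L' := L.take i ++ L.drop j with hL'
      have htklen : (L.take i).length = i := by
        simp [List.length_take]; omega
      have hw1 : G.IsWalk x v (L.take i) := walk_take hw hvi
      have hw2 : G.IsWalk v y (L.drop j) := walk_drop hw hvj
      have hw' : G.IsWalk x y L' := isWalk_append hw1 hw2
      have hlen' : L'.length ≤ n := by
        simp only [hL', List.length_append, htklen, List.length_drop]
        omega
      -- getElem? description of L'
      have hget : ∀ m, L'[m]? = if m < i then L[m]? else L[m + (j - i)]? := by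
        intro m
        by_cases hm : m < i
        · rw [hL', List.getElem?_append_left (by omega), List.getElem?_take_of_lt hm,
            if_pos hm]
        · rw [hL', List.getElem?_append_right (by omega), List.getElem?_drop, if_neg hm]
          congr 1
          omega
      -- unblockedness facts of L
      have hxS : x ∉ S := fun h => hnb (Or.inl h)
      have hyS : y ∉ S := fun h => hnb (Or.inr (Or.inl h))
      have hcol : ∀ (m : ℕ) (w : W), ColliderAt L m w →
          ∃ d, Relation.ReflTransGen G.dir w d ∧ d ∈ S := by
        intro m w hc
        by_contra hcon
        push_neg at hcon
        exact hnb (Or.inr (Or.inr (Or.inl ⟨m, w, hc, fun d hd hdS => (hcon d hd) hdS⟩)))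
      have hnc : ∀ (m : ℕ) (s t : Step W), L[m]? = some s → L[m+1]? = some t →
          s.b = t.a → ¬ (s.headB ∧ t.headA) → s.b ∈ S →
          ¬ (((s.k = .bw ∨ s.k = .un) ∧ ¬ G.Strongly s.b s.a) ∨
             ((t.k = .fw ∨ t.k = .un) ∧ ¬ G.Strongly t.a t.b)) := by
        intro m s t h1 h2 h3 h4 h5 h6
        exact hnb (Or.inr (Or.inr (Or.inr ⟨m, s, t, h1, h2, h3, h4, h5, h6⟩)))
      -- L' is unblocked
      have hnb' : ¬ G.SigmaBlockedWalk S x y L' := by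
        intro hb
        rcases hb with hb | hb | hb | hb
        · exact hxS hb
        · exact hyS hb
        · -- collider case
          obtain ⟨m, w, ⟨s, t, hs, ht, hsb, hta, hsh, hth⟩, hnd⟩ := hb
          rw [hget] at hs ht
          by_cases hm1 : m + 1 < i
          · -- both in prefix
            rw [if_pos (by omega)] at hs
            rw [if_pos hm1] at ht
            obtain ⟨d, hd, hdS⟩ := hcol m w ⟨s, t, hs, ht, hsb, hta, hsh, hth⟩
            exact hnd d hd hdS
          by_cases hm2 : i ≤ m
          · -- both in suffix
            rw [if_neg (by omega)] at hs
            rw [if_neg (by omega)] at ht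
            have ht' : L[m + (j - i) + 1]? = some t := by
              have he : m + (j - i) + 1 = m + 1 + (j - i) := by omega
              rw [he]; exact ht
            obtain ⟨d, hd, hdS⟩ := hcol (m + (j - i)) w ⟨s, t, hs, ht', hsb, hta, hsh, hth⟩
            exact hnd d hd hdS
          · -- the new junction: m + 1 = i
            have hmi : m + 1 = i := by omega
            rw [if_pos (by omega)] at hs
            rw [if_neg (by omega)] at ht
            have htj : L[j]? = some t := by
              have hje : j = m + 1 + (j - i) := by omega
              rw [hje]; exact ht
            -- w = v
            have hwv : w = v := by
              have h1 : ns[m+1]? = some s.b := walk_b_eq hs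
              rw [hmi, hvi] at h1
              have h2 : v = s.b := Option.some_inj.mp h1
              rw [← hsb]; exact h2.symm
            -- step L[i] exists
            obtain ⟨sI, hsI⟩ : ∃ sI, L[i]? = some sI :=
              ⟨L[i]'hilt, List.getElem?_eq_getElem _⟩
            have hsI' : L[m+1]? = some sI := by rw [hmi]; exact hsI
            have hglueI : s.b = sI.a := walk_glue hw hs hsI'
            by_cases hIa : sI.headA
            · -- old collider at junction m
              obtain ⟨d, hd, hdS⟩ :=
                hcol m w ⟨s, sI, hs, hsI', hsb, by
                  rw [← hsb]; exact hglueI.symm, hsh, hIa⟩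
              exact hnd d hd hdS
            -- L[i] is a forward step
            have hIfw : sI.k = .fw := k_fw_of_not_headA hD (walk_ok hw hsI) hIa
            -- step L[j-1] exists
            have hj1lt : j - 1 < L.length := by omega
            have hj11 : j - 1 + 1 = j := by omega
            obtain ⟨sJ, hsJ⟩ : ∃ sJ, L[j-1]? = some sJ :=
              ⟨L[j-1]'hj1lt, List.getElem?_eq_getElem _⟩
            have htj' : L[(j-1)+1]? = some t := by rw [hj11]; exact htj
            have hglueJ : sJ.b = t.a := walk_glue hw hsJ htj'
            have hsJb : sJ.b = w := by rw [hglueJ, hta]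
            by_cases hJb : sJ.headB
            · -- old collider at junction j - 1
              obtain ⟨d, hd, hdS⟩ :=
                hcol (j-1) w ⟨sJ, t, hsJ, htj', hsJb, hta, hJb, hth⟩
              exact hnd d hd hdS
            have hJbw : sJ.k = .bw := k_bw_of_not_headB hD (walk_ok hw hsJ) hJb
            by_cases hvS : w ∈ S
            · exact hnd w Relation.ReflTransGen.refl hvS
            -- find the first non-forward step in the loop
            have hJi : i + (j - 1 - i) = j - 1 := by omega
            have hexf : ∃ t0, ∃ s', L[i + t0]? = some s' ∧ s'.k ≠ .fw :=
              ⟨j - 1 - i, sJ, by rw [hJi]; exact hsJ, by rw [hJbw]; simp⟩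
            classical
            obtain ⟨sT, hsT, hsTk⟩ := Nat.find_spec hexf
            have ht0pos : 0 < Nat.find hexf := by
              rcases Nat.eq_zero_or_pos (Nat.find hexf) with h0 | h0
              · exfalso
                rw [h0, Nat.add_zero, hsI] at hsT
                exact hsTk ((Option.some_inj.mp hsT).symm ▸ hIfw)
              · exact h0
            have hfwall : ∀ u, u < Nat.find hexf → ∀ s', L[i + u]? = some s' → s'.k = .fw := by
              intro u hu s' hs'
              by_contra hcon
              exact Nat.find_min hexf hu ⟨s', hs', hcon⟩
            have ht0le : Nat.find hexf ≤ j - 1 - i :=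
              Nat.find_le ⟨sJ, by rw [hJi]; exact hsJ, by rw [hJbw]; simp⟩
            set t0 := Nat.find hexf with ht0
            -- step before sT is forward
            have ht01 : i + (t0 - 1) + 1 = i + t0 := by omega
            obtain ⟨sP, hsP⟩ : ∃ sP, L[i + (t0 - 1)]? = some sP :=
              ⟨L[i + (t0-1)]'(by omega), List.getElem?_eq_getElem _⟩
            have hsT' : L[i + (t0 - 1) + 1]? = some sT := by rw [ht01]; exact hsT
            have hsPfw : sP.k = .fw := hfwall (t0 - 1) (by omega) sP hsP
            have hglueP : sP.b = sT.a := walk_glue hw hsP hsT'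
            -- collider at junction i + (t0 - 1)
            have hTheadA : sT.headA := by
              have hnun := k_not_un hD (walk_ok hw hsT)
              unfold Step.headA
              cases hk : sT.k with
              | fw => exact absurd hk hsTk
              | bw => exact Or.inl rfl
              | bi => exact Or.inr rfl
              | un => exact absurd hk hnun
            have hPheadB : sP.headB := by unfold Step.headB; rw [hsPfw]; simp
            obtain ⟨d, hd, hdS⟩ := hcol (i + (t0 - 1)) sP.b
              ⟨sP, sT, hsP, hsT', rfl, hglueP.symm, hPheadB, hTheadA⟩
            -- w reaches sP.b by forward steps
            have hreach : Relation.ReflTransGen G.dir w sP.b := by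
              have hvi' : ns[i]? = some w := by rw [hvi, ← hwv]
              have hb' : ns[i + t0]? = some sP.b := by
                have := walk_b_eq (x := x) hsP
                rw [ht01] at this
                exact this
              exact walk_chain hw t0 i w sP.b hvi' hb' hfwall
            exact hnd d (hreach.trans hd) hdS
        · -- non-collider case
          obtain ⟨m, s, t, hs, ht, hba, hnch, hbS, hdisj⟩ := hb
          rw [hget] at hs ht
          by_cases hm1 : m + 1 < i
          · rw [if_pos (by omega)] at hs
            rw [if_pos hm1] at ht
            exact hnc m s t hs ht hba hnch hbS hdisj
          by_cases hm2 : i ≤ m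
          · rw [if_neg (by omega)] at hs
            rw [if_neg (by omega)] at ht
            have ht' : L[m + (j - i) + 1]? = some t := by
              have he : m + (j - i) + 1 = m + 1 + (j - i) := by omega
              rw [he]; exact ht
            exact hnc (m + (j - i)) s t hs ht' hba hnch hbS hdisj
          · have hmi : m + 1 = i := by omega
            rw [if_pos (by omega)] at hs
            rw [if_neg (by omega)] at ht
            have htj : L[j]? = some t := by
              have hje : j = m + 1 + (j - i) := by omega
              rw [hje]; exact ht
            have hsbv : s.b = v := by
              have h1 : ns[m+1]? = some s.b := walk_b_eq hs
              rw [hmi, hvi] at h1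
              exact (Option.some_inj.mp h1).symm
            have htav : t.a = v := by rw [← hba, hsbv]
            rcases hdisj with ⟨hk, hstr⟩ | ⟨hk, hstr⟩
            · -- use old junction m (= i - 1)
              obtain ⟨sI, hsI⟩ : ∃ sI, L[i]? = some sI :=
                ⟨L[i]'hilt, List.getElem?_eq_getElem _⟩
              have hsI' : L[m+1]? = some sI := by rw [hmi]; exact hsI
              have hglueI : s.b = sI.a := walk_glue hw hs hsI'
              have hsh : ¬ s.headB := by
                unfold Step.headB
                rcases hk with hk | hk <;> rw [hk] <;> simp
              exact hnc m s sI hs hsI' hglueI (fun h => hsh h.1) hbS (Or.inl ⟨hk, hstr⟩)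
            · -- use old junction j - 1
              have hj1lt : j - 1 < L.length := by omega
              obtain ⟨sJ, hsJ⟩ : ∃ sJ, L[j-1]? = some sJ :=
                ⟨L[j-1]'hj1lt, List.getElem?_eq_getElem _⟩
              have htj' : L[(j-1)+1]? = some t := by
                have hj11 : j - 1 + 1 = j := by omega
                rw [hj11]; exact htj
              have hglueJ : sJ.b = t.a := walk_glue hw hsJ htj'
              have hth : ¬ t.headA := by
                unfold Step.headA
                rcases hk with hk | hk <;> rw [hk] <;> simp
              exact hnc (j-1) sJ t hsJ htj' hglueJ (fun h => hth h.2)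
                (by rw [hglueJ, htav, ← hsbv]; exact hbS) (Or.inr ⟨hk, hstr⟩)
      exact ih L' hlen' hw' hnb'

end AuxStmt13

open MeasureTheory ProbabilityTheory in
lemma AuxStmt13.genOf_mono {Ω V : Type} [MeasurableSpace Ω] (X : V → Ω → ℝ) {A B : Set V}
    (h : A ⊆ B) : genOf X A ≤ genOf X B :=
  biSup_mono h

open MeasureTheory ProbabilityTheory in
lemma AuxStmt13.groupCI_mono {Ω V : Type} [m : MeasurableSpace Ω] [StandardBorelSpace Ω]
    (μ : Measure Ω) [IsFiniteMeasure μ] (X : V → Ω → ℝ) {A B A' B' W : Set V}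
    (hA : A' ⊆ A) (hB : B' ⊆ B) (h : GroupCI μ X A B W) : GroupCI μ X A' B' W := by
  obtain ⟨hle, hci⟩ := h
  refine ⟨hle, ?_⟩
  intro t1 t2 ht1 ht2
  exact hci t1 t2 (AuxStmt13.genOf_mono X hA _ ht1) (AuxStmt13.genOf_mono X hB _ ht2)
open MeasureTheory ProbabilityTheory MixedGraph in
/-- Suppose the micro-level pair `(G, μ)` is σ-Markovian and
σ-faithful, and suppose that for every path `Π` on the coarse graph there is a
path `π` on `G` with (i) `co(π) = Π` and (ii) whenever `Π` is not σ-blocked by a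
set of groups `S`, then `π` is not σ-blocked by `T = q ⁻¹' S`. Then the pair of
the coarse graph and the distribution is σ-faithful. -/
theorem coarse_sigmaFaithful_of_lift {Ω V I : Type} [MeasurableSpace Ω]
    [StandardBorelSpace Ω] [Fintype V] (μ : Measure Ω) [IsProbabilityMeasure μ]
    (X : V → Ω → ℝ) (hX : ∀ v, Measurable (X v)) (hpos : HasPositiveDensity μ X)
    (G : MixedGraph V) (hDMG : G.IsDMG)
    (hM : SigmaMarkov G μ X) (hF : SigmaFaithful G μ X)
    (q : V → I) (hq : Function.Surjective q)
    (hlift : ∀ (Y Z : I) (LP : List (Step I)), (G.coarse q).IsPath Y Z LP →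
      ∃ x y L, G.IsPath x y L ∧ q x = Y ∧ q y = Z ∧ coWalk q L = LP ∧
        ∀ S : Set I, ¬ (G.coarse q).SigmaBlockedWalk S Y Z LP →
          ¬ G.SigmaBlockedWalk (q ⁻¹' S) x y L) :
    SigmaFaithfulGrp G q μ X := by

  intro Y Z S hCI L hwalk
  by_contra hnb
  have hDcoarse : (G.coarse q).IsDMG := by
    intro a b h
    obtain ⟨_, y', z', _, _, hu⟩ := h
    exact hDMG y' z' hu
  obtain ⟨P, hP, hPnb⟩ :=
    AuxStmt13.exists_unblocked_path hDcoarse S Y Z L.length L le_rfl hwalk hnb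
  obtain ⟨x, y, Lm, hpath, hqx, hqy, hco, himp⟩ := hlift Y Z P hP
  have hci' : GroupCI μ X {x} {y} (q ⁻¹' S) := by
    refine AuxStmt13.groupCI_mono μ X ?_ ?_ hCI
    · intro v hv
      simp only [Set.mem_singleton_iff] at hv
      subst hv
      simp [hqx]
    · intro v hv
      simp only [Set.mem_singleton_iff] at hv
      subst hv
      simp [hqy]
  have hsep := hF x y (q ⁻¹' S) hci'
  exact himp S hPnb (hsep Lm hpath.1)
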